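/- Let C be a small groupoid. Let Q : C ⥤ Q_C be the coequalizer in Cat of the pair of functors d0, d1 : ∐_{σ} 1 ⇉ C, where the coproduct of copies of the terminal category 1 is indexed by the set of all isomorphisms σ of C, and d0 (respectively d1) sends the object of the σ-indexed copy of 1 to the domain (respectively codomain) of σ. Then Q_C is a skeletal groupoid: every morphism of Q_C is an isomorphism and every isomorphism of Q_C is an automorphism. -/

import Mathlib

/-!
Each property is read off the universal property of `Q : C ⥤ Q_C` by mapping `Q_C` to a
category in which it is visible. `Q` factors through the full subcategory of `Q_C` on its
image and, `C` being a groupoid, through the core of `Q_C`; uniqueness of factorizations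
makes both inclusions split epimorphisms in `Cat`, so every object of `Q_C` is some `Q X`
and every morphism is invertible. Finally `X ↦ Q X` is a functor from `C` to the discrete
category on the objects of `Q_C`; its factorization through `Q` is the identity on
objects, and a functor to a discrete category identifies isomorphic objects.
-/

open CategoryTheory Limits

universe u

/-- The set of isomorphisms of `C`, used to index a copower of the terminal category:
this coproduct of copies of the terminal category `1` is the discrete category on the
set of isomorphisms of `C`. -/
def IsoIndex (C : Type u) [Category.{u} C] : Type u := Σ X Y : C, X ≅ Y

/-- The functor `d0` sending the object of the copy of `1` indexed by an isomorphism
`σ` of `C` to the domain of `σ`. -/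
def isoDom (C : Type u) [Category.{u} C] :
    Cat.of (Discrete (IsoIndex C)) ⟶ Cat.of C :=
  (Discrete.functor fun σ : IsoIndex C => σ.1).toCatHom

/-- The functor `d1` sending the object of the copy of `1` indexed by an isomorphism
`σ` of `C` to the codomain of `σ`. -/
def isoCod (C : Type u) [Category.{u} C] :
    Cat.of (Discrete (IsoIndex C)) ⟶ Cat.of C :=
  (Discrete.functor fun σ : IsoIndex C => σ.2.1).toCatHom

def functorToDiscrete {C : Type*} [Category* C] {A : Type*} (f : C → A)
    (hf : ∀ {X Y : C}, (X ⟶ Y) → f X = f Y) : C ⥤ Discrete A where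
  obj X := ⟨f X⟩
  map g := eqToHom (congrArg Discrete.mk (hf g))

lemma isoDom_comp_eq_isoCod_comp {C : Type u} [Category.{u} C] {E : Cat.{u, u}}
    (F : Cat.of C ⟶ E) (hF : ∀ {X Y : C}, (X ≅ Y) → F.toFunctor.obj X = F.toFunctor.obj Y) :
    isoDom C ≫ F = isoCod C ≫ F :=
  Cat.Hom.ext <| Discrete.functor_ext fun σ => hF σ.2.2

namespace CategoryTheory.Limits.Cofork

section Category

variable {C : Type u} [Category.{u} C]

lemma π_obj_eq_of_iso (c : Cofork (isoDom C) (isoCod C)) {X Y : C} (e : X ≅ Y) :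
    c.π.toFunctor.obj X = c.π.toFunctor.obj Y :=
  Functor.congr_obj (congrArg Cat.Hom.toFunctor c.condition) ⟨⟨X, Y, e⟩⟩

variable {c : Cofork (isoDom C) (isoCod C)}

lemma exists_section_of_isColimit (hc : IsColimit c) {E : Type u} [Category.{u} E]
    (ι : E ⥤ c.pt) (hι : Function.Injective ι.obj) (F : C ⥤ E)
    (hF : F ⋙ ι = c.π.toFunctor) : ∃ s : c.pt ⥤ E, s ⋙ ι = 𝟭 c.pt := by
  have hF_obj : ∀ {X Y : C}, (X ≅ Y) → F.obj X = F.obj Y := fun e =>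
    hι <| by simpa only [← Functor.comp_obj, hF] using π_obj_eq_of_iso c e
  obtain ⟨s, hs⟩ := IsColimit.desc' hc F.toCatHom (isoDom_comp_eq_isoCod_comp _ hF_obj)
  have hsι : c.π ≫ s ≫ ι.toCatHom = c.π ≫ 𝟙 c.pt := by
    rw [← Category.assoc, hs, Category.comp_id]
    exact Cat.Hom.ext hF
  exact ⟨s.toFunctor, congrArg Cat.Hom.toFunctor (IsColimit.hom_ext hc hsι)⟩

lemma π_obj_surjective (hc : IsColimit c) : Function.Surjective c.π.toFunctor.obj := by
  let P : ObjectProperty c.pt := fun X => X ∈ Set.range c.π.toFunctor.obj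
  obtain ⟨s, hs⟩ := exists_section_of_isColimit hc P.ι
    (fun _ _ h => ObjectProperty.FullSubcategory.ext h)
    (P.lift c.π.toFunctor fun X => ⟨X, rfl⟩) rfl
  intro X
  have hX : (s.obj X).obj = X := Functor.congr_obj hs X
  exact hX ▸ (s.obj X).property

end Category

section Groupoid

variable {C : Type u} [Groupoid.{u} C] {c : Cofork (isoDom C) (isoCod C)}

lemma isIso_of_isColimit (hc : IsColimit c) {X Y : c.pt} (f : X ⟶ Y) : IsIso f := by
  obtain ⟨s, hs⟩ := exists_section_of_isColimit hc (Core.inclusion c.pt)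
    (fun X Y h => by cases X; cases Y; cases h; rfl) (Core.functorToCore c.π.toFunctor) rfl
  have : IsIso ((s ⋙ Core.inclusion c.pt).map f) := inferInstanceAs (IsIso (s.map f).iso.hom)
  exact (NatIso.isIso_map_iff (eqToIso hs) f).1 this

lemma skeletal_of_isColimit (hc : IsColimit c) : Skeletal c.pt := by
  let F := functorToDiscrete c.π.toFunctor.obj fun f =>
    π_obj_eq_of_iso c ((Groupoid.isoEquivHom _ _).symm f)
  obtain ⟨G, hG⟩ := IsColimit.desc' hc F.toCatHom
    (isoDom_comp_eq_isoCod_comp _ fun e => congrArg Discrete.mk (π_obj_eq_of_iso c e))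
  have hG_obj (X' : c.pt) : (G.toFunctor.obj X').as = X' := by
    obtain ⟨X, rfl⟩ := π_obj_surjective hc X'
    exact congrArg Discrete.as (Functor.congr_obj (congrArg Cat.Hom.toFunctor hG) X)
  rintro X' Y' ⟨e⟩
  simpa only [hG_obj] using Discrete.eq_of_hom (G.toFunctor.map e.hom)

end Groupoid

end CategoryTheory.Limits.Cofork

/-- If `C` is a groupoid, the coequalizer in `Cat` of the two functors
`d0, d1 : ∐_σ 1 ⇉ C`, indexed by the isomorphisms of `C` and picking out their domains
and codomains, is a skeletal groupoid: every morphism is an isomorphism and every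
isomorphism is an automorphism (isomorphic objects are equal). -/
theorem skeletal_groupoid_coequalizer_of_groupoid (C : Type u) [Groupoid.{u} C]
    (c : Cofork (isoDom C) (isoCod C)) (hc : IsColimit c) :
    (∀ (X Y : c.pt) (f : X ⟶ Y), IsIso f) ∧ Skeletal (c.pt : Type u) :=
  ⟨fun _ _ => Cofork.isIso_of_isColimit hc, Cofork.skeletal_of_isColimit hc⟩
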